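/- Let K_X be an N×N real symmetric positive definite matrix, let α > 0, let K_{Z*} = K_{Z*}(K_X, α), and set D := (1/N)·tr(K_{Z*}). Then for every N×N real symmetric positive definite matrix K_Z with (1/N)·tr(K_Z) ≤ D, it holds that log det(K_X + K_{Z*}) − log det(K_{Z*}) ≤ log det(K_X + K_Z) − log det(K_Z). That is, K_{Z*} minimizes log det(K_X + K_Z) − log det(K_Z) over all positive definite distortion covariance matrices of per-dimension trace at most D. -/

import Mathlib

open Matrix Classical

/-- The positive semidefinite square root of a matrix (junk value `0` if the matrix is not
positive semidefinite). -/
noncomputable def matSqrt {N : ℕ} (A : Matrix (Fin N) (Fin N) ℝ) : Matrix (Fin N) (Fin N) ℝ :=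
  if h : A.PosSemidef then
    (h.1.eigenvectorUnitary : Matrix (Fin N) (Fin N) ℝ) *
      diagonal ((RCLike.ofReal : ℝ → ℝ) ∘ Real.sqrt ∘ h.1.eigenvalues) *
      (star h.1.eigenvectorUnitary : Matrix (Fin N) (Fin N) ℝ)
  else 0

/-- The optimal distortion covariance matrix
`K_{Z*}(K, α) = (1/2)((K² + αK)^{1/2} − K)`. -/
noncomputable def Kzstar {N : ℕ} (K : Matrix (Fin N) (Fin N) ℝ) (α : ℝ) :
    Matrix (Fin N) (Fin N) ℝ :=
  (1 / 2 : ℝ) • (matSqrt (K ^ 2 + α • K) - K)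

/-!
Let `g(M) = log det (K + M) - log det M`. From `M⁻¹ + K⁻¹ = M⁻¹ (K + M) K⁻¹` we get
`g(M) = log det K - log det (M⁻¹ + K⁻¹)⁻¹`, and the parallel sum
`(M⁻¹ + K⁻¹)⁻¹ = K - K (K + M)⁻¹ K` is operator concave in `M` (because `P ↦ P⁻¹` is operator
convex), while `-log det` is convex and decreasing. Hence `g` is convex and lies above its tangent
at `A`, whose gradient is `(K + A)⁻¹ - A⁻¹`.

`K_{Z*}` is the function `a(k) = (√(k² + αk) - k) / 2` of `K`, and `(k + a) a = αk / 4`; so at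
`A = K_{Z*}` the gradient is the scalar matrix `-(4/α) I`, and the tangent inequality reads
`g(M) ≥ g(A) + (4/α) (tr A - tr M) ≥ g(A)`.
-/

open scoped MatrixOrder

namespace Matrix

variable {n : Type*} [Fintype n] [DecidableEq n]

section ParallelSum

variable {α : Type*} [CommRing α] {K A : Matrix n n α} (hK : IsUnit K.det) (hA : IsUnit A.det)
include hK hA

lemma inv_add_inv_eq_mul_add_mul : A⁻¹ + K⁻¹ = A⁻¹ * (K + A) * K⁻¹ := by
  rw [Matrix.mul_add, Matrix.add_mul, mul_nonsing_inv_cancel_right _ _ hK, nonsing_inv_mul _ hA,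
    Matrix.one_mul]

variable (hKA : IsUnit (K + A).det)
include hKA

omit hK in
lemma inv_sub_inv_add_eq : A⁻¹ - (K + A)⁻¹ = (K + A)⁻¹ * K * A⁻¹ := by
  have h : (K + A)⁻¹ * K = 1 - (K + A)⁻¹ * A := by
    rw [eq_sub_iff_add_eq, ← Matrix.mul_add, nonsing_inv_mul _ hKA]
  rw [h, Matrix.sub_mul, Matrix.one_mul, mul_nonsing_inv_cancel_right _ _ hA]

lemma inv_inv_add_inv : (A⁻¹ + K⁻¹)⁻¹ = K - K * (K + A)⁻¹ * K := by
  rw [inv_add_inv_eq_mul_add_mul hK hA, Matrix.mul_inv_rev, Matrix.mul_inv_rev,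
    nonsing_inv_nonsing_inv _ hK, nonsing_inv_nonsing_inv _ hA]
  have h : (K + A)⁻¹ * A = 1 - (K + A)⁻¹ * K := by
    rw [eq_sub_iff_add_eq, ← Matrix.mul_add, add_comm A, nonsing_inv_mul _ hKA]
  rw [h, Matrix.mul_sub, Matrix.mul_one, Matrix.mul_assoc]

lemma inv_add_mul_inv_add_inv_mul_inv_add :
    (K + A)⁻¹ * K * (A⁻¹ + K⁻¹) * K * (K + A)⁻¹ = A⁻¹ - (K + A)⁻¹ := by
  rw [inv_sub_inv_add_eq hA hKA, inv_add_inv_eq_mul_add_mul hK hA]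
  simp only [Matrix.mul_assoc, nonsing_inv_mul_cancel_left _ _ hK, mul_nonsing_inv _ hKA,
    Matrix.mul_one]

end ParallelSum

lemma PosDef.isUnit_det {A : Matrix n n ℝ} (hA : A.PosDef) : IsUnit A.det :=
  hA.det_pos.ne'.isUnit

lemma log_det_inv (A : Matrix n n ℝ) : Real.log A⁻¹.det = -Real.log A.det := by
  rw [det_nonsing_inv, Ring.inverse_eq_inv', Real.log_inv]

lemma PosSemidef.trace_mul_le_trace_mul {C X Y : Matrix n n ℝ} (hC : C.PosSemidef) (h : X ≤ Y) :
    (C * X).trace ≤ (C * Y).trace := by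
  obtain ⟨B, rfl⟩ := CStarAlgebra.nonneg_iff_eq_star_mul_self.mp hC.nonneg
  rw [← sub_nonneg, ← trace_sub, ← Matrix.mul_sub, Matrix.mul_assoc, trace_mul_comm,
    Matrix.mul_assoc, ← Matrix.mul_assoc]
  exact (h.mul_mul_conjTranspose_same B).trace_nonneg

lemma PosDef.log_det_le_trace_sub_card {Z : Matrix n n ℝ} (hZ : Z.PosDef) :
    Real.log Z.det ≤ Z.trace - Fintype.card n := by
  rw [hZ.1.det_eq_prod_eigenvalues, hZ.1.trace_eq_sum_eigenvalues]
  simp only [RCLike.ofReal_real_eq_id, id]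
  rw [Real.log_prod fun i _ => (hZ.eigenvalues_pos i).ne']
  calc ∑ i, Real.log (hZ.1.eigenvalues i) ≤ ∑ i, (hZ.1.eigenvalues i - 1) :=
        Finset.sum_le_sum fun i _ => Real.log_le_sub_one_of_pos (hZ.eigenvalues_pos i)
    _ = _ := by simp [Finset.sum_sub_distrib]

lemma PosDef.log_det_add_log_det_le {H Y : Matrix n n ℝ} (hH : H.PosDef) (hY : Y.PosDef) :
    Real.log H.det + Real.log Y.det ≤ (H * Y).trace - Fintype.card n := by
  obtain ⟨B, hB, rfl⟩ : ∃ B : Matrix n n ℝ, IsUnit B ∧ H = star B * B := by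
    open scoped Matrix.Norms.L2Operator in
    exact CStarAlgebra.isStrictlyPositive_iff_eq_star_mul_self.mp hH.isStrictlyPositive
  have hdet : (star B * B * Y).det = (B * Y * star B).det := by simp only [det_mul]; ring
  have htr : (star B * B * Y).trace = (B * Y * star B).trace := by
    rw [Matrix.mul_assoc, trace_mul_comm]
  rw [← Real.log_mul hH.det_pos.ne' hY.det_pos.ne', ← det_mul, hdet, htr]
  exact (hB.posDef_star_right_conjugate_iff.mpr hY).log_det_le_trace_sub_card

lemma PosDef.inv_sub_inv_le {P Q : Matrix n n ℝ} (hP : P.PosDef) (hQ : Q.PosDef) :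
    P⁻¹ - Q⁻¹ ≤ P⁻¹ * (Q - P) * P⁻¹ := by
  have h : P⁻¹ * (Q - P) * P⁻¹ - (P⁻¹ - Q⁻¹) = (Q⁻¹ - P⁻¹)ᴴ * Q * (Q⁻¹ - P⁻¹) := by
    rw [conjTranspose_sub, hP.1.inv.eq, hQ.1.inv.eq]
    simp only [Matrix.mul_sub, Matrix.sub_mul, Matrix.mul_assoc,
      nonsing_inv_mul_cancel_left _ _ hQ.isUnit_det, mul_nonsing_inv _ hQ.isUnit_det,
      nonsing_inv_mul _ hP.isUnit_det, Matrix.mul_one, Matrix.one_mul]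
    abel
  rw [le_iff, h]
  exact hQ.posSemidef.conjTranspose_mul_mul_same _

/-- For covariances `K` of the source and `M` of the noise, this is twice the mutual information
(in nats) of the Gaussian channel `Y = X + Z`. -/
noncomputable def logDetRatio (K M : Matrix n n ℝ) : ℝ := Real.log (K + M).det - Real.log M.det

lemma logDetRatio_eq {K M : Matrix n n ℝ} (hK : K.PosDef) (hM : M.PosDef) :
    logDetRatio K M = Real.log K.det + Real.log (M⁻¹ + K⁻¹).det := by
  rw [logDetRatio, inv_add_inv_eq_mul_add_mul hK.isUnit_det hM.isUnit_det, det_mul, det_mul,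
    Real.log_mul (mul_ne_zero hM.inv.det_pos.ne' (hK.add hM).det_pos.ne') hK.inv.det_pos.ne',
    Real.log_mul hM.inv.det_pos.ne' (hK.add hM).det_pos.ne', log_det_inv, log_det_inv]
  ring

lemma logDetRatio_sub_le {K A M : Matrix n n ℝ} (hK : K.PosDef) (hA : A.PosDef) (hM : M.PosDef) :
    logDetRatio K A - logDetRatio K M ≤ ((A⁻¹ - (K + A)⁻¹) * (M - A)).trace := by
  have hHA : (A⁻¹ + K⁻¹).PosDef := hA.inv.add hK.inv
  have hHM : (M⁻¹ + K⁻¹).PosDef := hM.inv.add hK.inv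
  have hinv : (M⁻¹ + K⁻¹)⁻¹ = (A⁻¹ + K⁻¹)⁻¹ + K * ((K + A)⁻¹ - (K + M)⁻¹) * K := by
    rw [inv_inv_add_inv hK.isUnit_det hA.isUnit_det (hK.add hA).isUnit_det,
      inv_inv_add_inv hK.isUnit_det hM.isUnit_det (hK.add hM).isUnit_det]
    noncomm_ring
  have hKHK : (K * (A⁻¹ + K⁻¹) * K).PosSemidef := by
    have := hHA.posSemidef.conjTranspose_mul_mul_same K
    rwa [hK.1.eq] at this
  calc logDetRatio K A - logDetRatio K M
      = Real.log (A⁻¹ + K⁻¹).det + Real.log (M⁻¹ + K⁻¹)⁻¹.det := by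
        rw [logDetRatio_eq hK hA, logDetRatio_eq hK hM, log_det_inv]; ring
    _ ≤ ((A⁻¹ + K⁻¹) * (M⁻¹ + K⁻¹)⁻¹).trace - Fintype.card n :=
        hHA.log_det_add_log_det_le hHM.inv
    _ = (K * (A⁻¹ + K⁻¹) * K * ((K + A)⁻¹ - (K + M)⁻¹)).trace := by
        rw [hinv, Matrix.mul_add, mul_nonsing_inv _ hHA.isUnit_det, trace_add, trace_one,
          add_sub_cancel_left, ← Matrix.mul_assoc, trace_mul_comm]
        simp only [Matrix.mul_assoc]
    _ ≤ (K * (A⁻¹ + K⁻¹) * K * ((K + A)⁻¹ * ((K + M) - (K + A)) * (K + A)⁻¹)).trace :=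
        hKHK.trace_mul_le_trace_mul ((hK.add hA).inv_sub_inv_le (hK.add hM))
    _ = ((A⁻¹ - (K + A)⁻¹) * (M - A)).trace := by
        rw [← inv_add_mul_inv_add_inv_mul_inv_add hK.isUnit_det hA.isUnit_det
            (hK.add hA).isUnit_det, add_sub_add_left_eq_sub, trace_mul_comm, Matrix.mul_assoc,
          trace_mul_comm]
        simp only [Matrix.mul_assoc]

end Matrix

section OptimalDistortion

variable {N : ℕ}

lemma matSqrt_eq_cfc {A : Matrix (Fin N) (Fin N) ℝ} (hA : A.PosSemidef) :
    matSqrt A = cfc Real.sqrt A := by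
  rw [matSqrt, dif_pos hA, hA.1.cfc_eq, IsHermitian.cfc, Unitary.conjStarAlgAut_apply]

lemma Kzstar_eq_cfc {K : Matrix (Fin N) (Fin N) ℝ} (hK : K.PosSemidef) {α : ℝ} (hα : 0 ≤ α) :
    Kzstar K α = cfc (fun x => (√(x ^ 2 + α * x) - x) / 2) K := by
  have hKsa : IsSelfAdjoint K := hK.1
  have hspec : ∀ x ∈ spectrum ℝ K, 0 ≤ x ^ 2 + α * x := fun x hx => by
    have := spectrum_nonneg_of_nonneg hK.nonneg hx
    positivity
  have hg : K ^ 2 + α • K = cfc (fun x => x ^ 2 + α * x) K := by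
    rw [cfc_add .., cfc_pow_id .., cfc_const_mul_id ..]
  have hpsd : (K ^ 2 + α • K).PosSemidef := by
    rw [hg, ← nonneg_iff_posSemidef]
    exact cfc_nonneg hspec
  have hf : (fun x => (√(x ^ 2 + α * x) - x) / 2) =
      fun x => (1 / 2 : ℝ) * (√(x ^ 2 + α * x) - x) := by
    ext; ring
  rw [Kzstar, matSqrt_eq_cfc hpsd, hg, ← cfc_comp' Real.sqrt (fun x => x ^ 2 + α * x) K, hf,
    cfc_const_mul .., cfc_sub .., cfc_id' ..]

lemma add_Kzstar_mul_Kzstar {K : Matrix (Fin N) (Fin N) ℝ} (hK : K.PosSemidef) {α : ℝ}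
    (hα : 0 ≤ α) : (K + Kzstar K α) * Kzstar K α = (α / 4) • K := by
  have hKsa : IsSelfAdjoint K := hK.1
  rw [Kzstar_eq_cfc hK hα, ← cfc_const_mul_id (α / 4) K]
  nth_rewrite 1 [← cfc_id' ℝ K]
  rw [← cfc_add .., ← cfc_mul ..]
  refine cfc_congr fun x hx => ?_
  have hs := Real.sq_sqrt (add_nonneg (sq_nonneg x)
    (mul_nonneg hα (spectrum_nonneg_of_nonneg hK.nonneg hx)))
  linear_combination hs / 4

lemma Kzstar_posDef {K : Matrix (Fin N) (Fin N) ℝ} (hK : K.PosDef) {α : ℝ} (hα : 0 < α) :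
    (Kzstar K α).PosDef := by
  have hKsa : IsSelfAdjoint K := hK.1
  rw [Kzstar_eq_cfc hK.posSemidef hα.le, ← isStrictlyPositive_iff_posDef]
  refine (cfc_isStrictlyPositive_iff _ _ ..).mpr fun x hx => ?_
  have hx := hK.isStrictlyPositive.spectrum_pos hx
  have : x < √(x ^ 2 + α * x) := (Real.lt_sqrt hx.le).mpr (by nlinarith)
  linarith

lemma inv_Kzstar_sub_inv_add_Kzstar {K : Matrix (Fin N) (Fin N) ℝ} (hK : K.PosDef) {α : ℝ}
    (hα : 0 < α) : (Kzstar K α)⁻¹ - (K + Kzstar K α)⁻¹ = (4 / α) • 1 := by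
  set A := Kzstar K α
  have hA : A.PosDef := Kzstar_posDef hK hα
  have hKA : (K + A).PosDef := hK.add hA
  have hK_eq : K = (4 / α) • ((K + A) * A) := by
    rw [add_Kzstar_mul_Kzstar hK.posSemidef hα.le, smul_smul, div_mul_div_cancel₀ hα.ne',
      div_self four_ne_zero, one_smul]
  calc A⁻¹ - (K + A)⁻¹ = (K + A)⁻¹ * ((4 / α) • ((K + A) * A)) * A⁻¹ := by
        rw [← hK_eq, inv_sub_inv_add_eq hA.isUnit_det hKA.isUnit_det]
    _ = (4 / α) • 1 := by
        rw [Matrix.mul_smul, Matrix.smul_mul, nonsing_inv_mul_cancel_left _ _ hKA.isUnit_det,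
          mul_nonsing_inv _ hA.isUnit_det]

end OptimalDistortion

theorem stmt_14 {N : ℕ} (KX : Matrix (Fin N) (Fin N) ℝ) (hKX : KX.PosDef)
    (α : ℝ) (hα : 0 < α) :
    ∀ KZ : Matrix (Fin N) (Fin N) ℝ, KZ.PosDef →
      ((N : ℝ))⁻¹ * Matrix.trace KZ ≤ ((N : ℝ))⁻¹ * Matrix.trace (Kzstar KX α) →
      Real.log (KX + Kzstar KX α).det - Real.log (Kzstar KX α).det ≤
        Real.log (KX + KZ).det - Real.log KZ.det := by
  intro KZ hKZ htrace
  have htr : KZ.trace ≤ (Kzstar KX α).trace := by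
    rcases Nat.eq_zero_or_pos N with rfl | hN
    · simp [Matrix.trace]
    · exact le_of_mul_le_mul_left htrace (by positivity)
  have htangent := logDetRatio_sub_le hKX (Kzstar_posDef hKX hα) hKZ
  rw [inv_Kzstar_sub_inv_add_Kzstar hKX hα, Matrix.smul_mul, Matrix.one_mul, trace_smul,
    trace_sub, smul_eq_mul] at htangent
  have hslack : 4 / α * (KZ.trace - (Kzstar KX α).trace) ≤ 0 :=
    mul_nonpos_of_nonneg_of_nonpos (by positivity) (by linarith)
  exact sub_nonpos.mp (htangent.trans hslack)
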